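/- The discrete infinitesimal shape differences satisfy the exact decomposition fᵀ W E^V_C g = fᵀ W E^V g + Σ_{T∈F} div(V)_T ⟨∇f, ∇g⟩_T μ(T) for all piecewise-linear functions f, g, where div(V)_T = Tr((EᵀE)^{-1} Eᵀ (∇̄_E V)) is the per-triangle discrete divergence. -/

import Mathlib

open Matrix

/-- The `3 × 2` edge matrix `E = (p_i − p_j, p_j − p_k)` of the triangle `T = (i,j,k)`
under the vertex embedding `p`. -/
def faceE {n : ℕ} (p : Fin n → Fin 3 → ℝ) (T : Fin n × Fin n × Fin n) :
    Matrix (Fin 3) (Fin 2) ℝ :=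
  Matrix.of fun r c => ![p T.1 - p T.2.1, p T.2.1 - p T.2.2] c r

/-- Edge differences `(f_i − f_j, f_j − f_k)` of a per-vertex function on triangle `T`. -/
def dF {n : ℕ} (f : Fin n → ℝ) (T : Fin n × Fin n × Fin n) : Fin 2 → ℝ :=
  ![f T.1 - f T.2.1, f T.2.1 - f T.2.2]

/-- Coordinates of the piecewise-constant tangential gradient of `f` on `T`:
`(EᵀE)⁻¹ dF`. -/
noncomputable def gradCoeff {n : ℕ} (p : Fin n → Fin 3 → ℝ) (f : Fin n → ℝ)
    (T : Fin n × Fin n × Fin n) : Fin 2 → ℝ :=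
  ((faceE p T)ᵀ * faceE p T)⁻¹ *ᵥ dF f T

/-- The gradient of `f` on triangle `T`, as a vector of `ℝ³`. -/
noncomputable def gradVec {n : ℕ} (p : Fin n → Fin 3 → ℝ) (f : Fin n → ℝ)
    (T : Fin n × Fin n × Fin n) : Fin 3 → ℝ :=
  faceE p T *ᵥ gradCoeff p f T

/-- Cross product of vectors in `ℝ³`. -/
def crossP (u v : Fin 3 → ℝ) : Fin 3 → ℝ :=
  ![u 1 * v 2 - u 2 * v 1, u 2 * v 0 - u 0 * v 2, u 0 * v 1 - u 1 * v 0]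

/-- Area `μ(T)` of the triangle `T` under the embedding `p`. -/
noncomputable def faceArea {n : ℕ} (p : Fin n → Fin 3 → ℝ)
    (T : Fin n × Fin n × Fin n) : ℝ :=
  Real.sqrt (∑ r, (crossP (p T.1 - p T.2.1) (p T.2.1 - p T.2.2) r) ^ 2) / 2

/-- The discrete strain tensor `(L_V g)(∇f, ∇g)_T` on triangle `T`, built from the
finite-difference connection `∇̄_E V = (V_i − V_j, V_j − V_k)`. -/
noncomputable def strainOnGrads {n : ℕ} (p V : Fin n → Fin 3 → ℝ) (f g : Fin n → ℝ)
    (T : Fin n × Fin n × Fin n) : ℝ :=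
  gradVec p f T ⬝ᵥ (faceE V T *ᵥ gradCoeff p g T) +
    (faceE V T *ᵥ gradCoeff p f T) ⬝ᵥ gradVec p g T


/-- The per-triangle discrete divergence `div(V)_T = Tr((EᵀE)⁻¹ Eᵀ (∇̄_E V))`. -/
noncomputable def faceDiv {n : ℕ} (p V : Fin n → Fin 3 → ℝ)
    (T : Fin n × Fin n × Fin n) : ℝ :=
  Matrix.trace (((faceE p T)ᵀ * faceE p T)⁻¹ * ((faceE p T)ᵀ * faceE V T))

/-! Write `A = E`, `B = ∇̄_E V` and `G(t) = (A + tB)ᵀ(A + tB)`, so `G'(0) = AᵀB + BᵀA`. On the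
deformed mesh the integrand is `⟨∇f, ∇g⟩ μ = aᵀ G⁻¹ b · √(det G) / 2` with `a, b` the edge
differences of `f, g`. Differentiating `G⁻¹` gives `−aᵀ G⁻¹ G' G⁻¹ b`, which is minus the strain,
and Jacobi's formula gives `(√det G)' = √(det G) · tr(G⁻¹ G') / 2`, which is `div(V) · μ` because
`G⁻¹` is symmetric, so `tr(G⁻¹ BᵀA) = tr(G⁻¹ AᵀB)`. The product rule then gives the
decomposition triangle by triangle. For `2 × 2` matrices everything is explicit:
`G⁻¹ = adj G / det G` and `adj` is linear. -/

namespace Matrix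

section Gram

variable {R : Type*} [CommRing R] {m k : Type*} [Fintype m]

theorem transpose_mul_self_isSymm (M : Matrix m k R) : (Mᵀ * M).IsSymm := by
  simp [IsSymm, transpose_mul]

variable [Fintype k]

theorem mulVec_dotProduct_mulVec (M N : Matrix m k R) (x y : k → R) :
    (M *ᵥ x) ⬝ᵥ (N *ᵥ y) = x ⬝ᵥ (Mᵀ * N) *ᵥ y := by
  rw [← mulVec_mulVec, dotProduct_mulVec x Mᵀ, vecMul_transpose]

theorem mulVec_add_mulVec_dotProduct_of_isSymm {P : Matrix k k R} (hP : P.IsSymm)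
    (A B : Matrix m k R) (a b : k → R) :
    (A *ᵥ (P *ᵥ a)) ⬝ᵥ (B *ᵥ (P *ᵥ b)) + (B *ᵥ (P *ᵥ a)) ⬝ᵥ (A *ᵥ (P *ᵥ b)) =
      a ⬝ᵥ (P * (Aᵀ * B + Bᵀ * A) * P) *ᵥ b := by
  rw [mulVec_dotProduct_mulVec A B, mulVec_dotProduct_mulVec B A, ← dotProduct_add,
    ← add_mulVec, mulVec_mulVec, mulVec_dotProduct_mulVec, hP.eq, Matrix.mul_assoc]

theorem trace_mul_add_transpose_of_isSymm {P : Matrix k k R} (hP : P.IsSymm)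
    (A B : Matrix m k R) :
    trace (P * (Aᵀ * B + Bᵀ * A)) = 2 * trace (P * (Aᵀ * B)) := by
  have hswap : trace (P * (Bᵀ * A)) = trace (P * (Aᵀ * B)) :=
    calc trace (P * (Bᵀ * A)) = trace ((P * (Bᵀ * A))ᵀ) := (trace_transpose _).symm
      _ = trace (Aᵀ * B * P) := by rw [transpose_mul, transpose_mul, transpose_transpose, hP.eq]
      _ = trace (P * (Aᵀ * B)) := trace_mul_comm _ _
  rw [Matrix.mul_add, trace_add, hswap, two_mul]

variable [DecidableEq k]

theorem mulVec_inv_mulVec_dotProduct (M : Matrix m k R) (a b : k → R) :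
    (M *ᵥ ((Mᵀ * M)⁻¹ *ᵥ a)) ⬝ᵥ (M *ᵥ ((Mᵀ * M)⁻¹ *ᵥ b)) = a ⬝ᵥ (Mᵀ * M)⁻¹ *ᵥ b := by
  by_cases h : IsUnit (Mᵀ * M).det
  · rw [mulVec_dotProduct_mulVec, mulVec_mulVec, mul_nonsing_inv _ h, one_mulVec,
      dotProduct_comm, dotProduct_mulVec, dotProduct_comm, ← mulVec_transpose,
      (transpose_mul_self_isSymm M).inv.eq]
  · simp [nonsing_inv_apply_not_isUnit _ h]

end Gram

section FinTwo

variable {R : Type*} [CommRing R]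

theorem adjugate_mul_mul_adjugate_fin_two (X Y : Matrix (Fin 2) (Fin 2) R) :
    X.adjugate * Y * X.adjugate = trace (X.adjugate * Y) • X.adjugate - X.det • Y.adjugate := by
  ext i j
  fin_cases i <;> fin_cases j <;>
    simp [adjugate_fin_two, det_fin_two, trace_fin_two, mul_apply, vecMul, dotProduct,
      Fin.sum_univ_two] <;> ring

variable {G : ℝ → Matrix (Fin 2) (Fin 2) ℝ} {G' : Matrix (Fin 2) (Fin 2) ℝ} {t₀ : ℝ}

theorem hasDerivAt_det_fin_two (hG : ∀ i j, HasDerivAt (fun t => G t i j) (G' i j) t₀) :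
    HasDerivAt (fun t => (G t).det) (trace ((G t₀).adjugate * G')) t₀ := by
  simp only [det_fin_two]
  refine (((hG 0 0).mul (hG 1 1)).sub ((hG 0 1).mul (hG 1 0))).congr_deriv ?_
  simp [trace_fin_two, adjugate_fin_two, vecMul, dotProduct, Fin.sum_univ_two]
  ring

theorem hasDerivAt_adjugate_fin_two (hG : ∀ i j, HasDerivAt (fun t => G t i j) (G' i j) t₀)
    (i j : Fin 2) : HasDerivAt (fun t => (G t).adjugate i j) (G'.adjugate i j) t₀ := by
  fin_cases i <;> fin_cases j <;> simp [adjugate_fin_two]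
  all_goals first | exact hG _ _ | exact (hG _ _).neg

theorem hasDerivAt_inv_fin_two (hG : ∀ i j, HasDerivAt (fun t => G t i j) (G' i j) t₀)
    (hdet : (G t₀).det ≠ 0) (i j : Fin 2) :
    HasDerivAt (fun t => (G t)⁻¹ i j) (-((G t₀)⁻¹ * G' * (G t₀)⁻¹) i j) t₀ := by
  have hinv : ∀ X : Matrix (Fin 2) (Fin 2) ℝ, X⁻¹ = X.det⁻¹ • X.adjugate := fun X => by
    rw [inv_def, Ring.inverse_eq_inv']
  simp only [hinv, smul_apply, smul_eq_mul, ← div_eq_inv_mul]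
  refine ((hasDerivAt_adjugate_fin_two hG i j).div (hasDerivAt_det_fin_two hG) hdet).congr_deriv ?_
  simp only [Matrix.smul_mul, Matrix.mul_smul, adjugate_mul_mul_adjugate_fin_two, smul_apply,
    sub_apply, smul_eq_mul]
  field_simp
  ring

theorem hasDerivAt_sqrt_det_fin_two (hG : ∀ i j, HasDerivAt (fun t => G t i j) (G' i j) t₀)
    (hpos : 0 < (G t₀).det) :
    HasDerivAt (fun t => √(G t).det) (√(G t₀).det * trace ((G t₀)⁻¹ * G') / 2) t₀ := by
  refine ((hasDerivAt_det_fin_two hG).sqrt hpos.ne').congr_deriv ?_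
  have hsqrt : √(G t₀).det ^ 2 = (G t₀).det := Real.sq_sqrt hpos.le
  have hne : √(G t₀).det ≠ 0 := (Real.sqrt_pos.2 hpos).ne'
  rw [inv_def, Ring.inverse_eq_inv', smul_mul, trace_smul, smul_eq_mul]
  field_simp
  rw [hsqrt]

end FinTwo

end Matrix

theorem hasDerivAt_transpose_mul_self_add_smul {m k : Type*} [Fintype m]
    (A B : Matrix m k ℝ) (i j : k) :
    HasDerivAt (fun t : ℝ => ((A + t • B)ᵀ * (A + t • B)) i j) ((Aᵀ * B + Bᵀ * A) i j) 0 := by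
  have hline : ∀ r l, HasDerivAt (fun t : ℝ => A r l + t * B r l) (B r l) 0 := fun r l => by
    simpa using ((hasDerivAt_id (0 : ℝ)).mul_const (B r l)).const_add (A r l)
  simp only [mul_apply, transpose_apply, Matrix.add_apply, Matrix.smul_apply, smul_eq_mul]
  refine (HasDerivAt.fun_sum fun r _ => (hline r i).mul (hline r j)).congr_deriv ?_
  simp [Finset.sum_add_distrib, add_comm]

theorem HasDerivAt.dotProduct_mulVec {m k : Type*} [Fintype m] [Fintype k]
    {X : ℝ → Matrix m k ℝ} {X' : Matrix m k ℝ} {t₀ : ℝ}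
    (hX : ∀ i j, HasDerivAt (fun t => X t i j) (X' i j) t₀) (a : m → ℝ) (b : k → ℝ) :
    HasDerivAt (fun t => a ⬝ᵥ X t *ᵥ b) (a ⬝ᵥ X' *ᵥ b) t₀ := by
  simp only [dotProduct, mulVec]
  exact HasDerivAt.fun_sum fun i _ =>
    (HasDerivAt.fun_sum fun j _ => (hX i j).mul_const (b j)).const_mul (a i)

section Mesh

variable {n : ℕ} (p V : Fin n → Fin 3 → ℝ) (f g : Fin n → ℝ) (T : Fin n × Fin n × Fin n)

theorem faceE_add_smul (t : ℝ) :
    faceE (fun i => p i + t • V i) T = faceE p T + t • faceE V T := by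
  ext r c
  fin_cases c <;> simp [faceE] <;> ring

theorem faceArea_eq_sqrt_det : faceArea p T = √((faceE p T)ᵀ * faceE p T).det / 2 := by
  rw [faceArea]
  congr 2
  simp [det_fin_two, mul_apply, crossP, faceE, Fin.sum_univ_three]
  ring

theorem gradVec_dotProduct_gradVec :
    gradVec p f T ⬝ᵥ gradVec p g T =
      dF f T ⬝ᵥ ((faceE p T)ᵀ * faceE p T)⁻¹ *ᵥ dF g T :=
  mulVec_inv_mulVec_dotProduct _ _ _

theorem strainOnGrads_eq :
    strainOnGrads p V f g T =
      dF f T ⬝ᵥ (((faceE p T)ᵀ * faceE p T)⁻¹ *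
        ((faceE p T)ᵀ * faceE V T + (faceE V T)ᵀ * faceE p T) *
          ((faceE p T)ᵀ * faceE p T)⁻¹) *ᵥ dF g T :=
  mulVec_add_mulVec_dotProduct_of_isSymm (transpose_mul_self_isSymm _).inv _ _ _ _

theorem two_mul_faceDiv :
    2 * faceDiv p V T = trace (((faceE p T)ᵀ * faceE p T)⁻¹ *
      ((faceE p T)ᵀ * faceE V T + (faceE V T)ᵀ * faceE p T)) :=
  (trace_mul_add_transpose_of_isSymm (transpose_mul_self_isSymm _).inv _ _).symm

variable {p T}

theorem hasDerivAt_gradVec_dotProduct_deform (hT : IsUnit ((faceE p T)ᵀ * faceE p T).det) :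
    HasDerivAt (fun t : ℝ =>
        gradVec (fun i => p i + t • V i) f T ⬝ᵥ gradVec (fun i => p i + t • V i) g T)
      (-strainOnGrads p V f g T) 0 := by
  simp only [gradVec_dotProduct_gradVec, faceE_add_smul, strainOnGrads_eq, ← dotProduct_neg,
    ← neg_mulVec]
  have hinv := hasDerivAt_inv_fin_two
    (hasDerivAt_transpose_mul_self_add_smul (faceE p T) (faceE V T)) (by simpa using hT.ne_zero)
  simp only [zero_smul, add_zero] at hinv
  exact HasDerivAt.dotProduct_mulVec hinv _ _

theorem hasDerivAt_faceArea_deform (hT : IsUnit ((faceE p T)ᵀ * faceE p T).det) :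
    HasDerivAt (fun t : ℝ => faceArea (fun i => p i + t • V i) T)
      (faceDiv p V T * faceArea p T) 0 := by
  have hpos : 0 < ((faceE p T)ᵀ * faceE p T).det :=
    lt_of_le_of_ne (posSemidef_conjTranspose_mul_self (faceE p T)).det_nonneg hT.ne_zero.symm
  simp only [faceArea_eq_sqrt_det, faceE_add_smul]
  have := (hasDerivAt_sqrt_det_fin_two
    (hasDerivAt_transpose_mul_self_add_smul (faceE p T) (faceE V T))
    (by simpa using hpos)).div_const 2
  refine this.congr_deriv ?_
  simp only [zero_smul, add_zero, ← two_mul_faceDiv]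
  ring

theorem hasDerivAt_conformal_integrand (hT : IsUnit ((faceE p T)ᵀ * faceE p T).det) :
    HasDerivAt (fun t : ℝ =>
        (gradVec (fun i => p i + t • V i) f T ⬝ᵥ gradVec (fun i => p i + t • V i) g T) *
          faceArea (fun i => p i + t • V i) T)
      (-(strainOnGrads p V f g T * faceArea p T) +
        faceDiv p V T * (gradVec p f T ⬝ᵥ gradVec p g T) * faceArea p T) 0 := by
  refine ((hasDerivAt_gradVec_dotProduct_deform V f g hT).mul
    (hasDerivAt_faceArea_deform V hT)).congr_deriv ?_
  simp only [zero_smul, add_zero]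
  ring

end Mesh

/-- `hEC` says `c = fᵀ W E^V_C g`; the first sum on the right is `fᵀ W E^V g`. -/
theorem discrete_infinitesimal_shape_difference_decomposition
    (n : ℕ) (F : Finset (Fin n × Fin n × Fin n))
    (p V : Fin n → Fin 3 → ℝ)
    (hnd : ∀ T ∈ F, IsUnit ((faceE p T)ᵀ * faceE p T).det)
    (f g : Fin n → ℝ)
    (c : ℝ)
    (hEC : HasDerivAt
      (fun t : ℝ => ∑ T ∈ F,
        (gradVec (fun i => p i + t • V i) f T ⬝ᵥ gradVec (fun i => p i + t • V i) g T) *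
          faceArea (fun i => p i + t • V i) T) c 0) :
    c = (-∑ T ∈ F, strainOnGrads p V f g T * faceArea p T) +
      ∑ T ∈ F, faceDiv p V T * (gradVec p f T ⬝ᵥ gradVec p g T) * faceArea p T := by
  have hsum := HasDerivAt.fun_sum fun T hT => hasDerivAt_conformal_integrand V f g (hnd T hT)
  rw [hEC.unique hsum, Finset.sum_add_distrib, Finset.sum_neg_distrib]
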